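/- For any nonempty finite family F of functions X -> [a,b] with z = max(|a|,|b|), sample S of size m, n >= 1, and eta in (0,1): with probability at least 1 - eta over the choice of the n x m Rademacher matrix sigma, ERA(F, S) <= MCERA_n(F, S, sigma) + 2*z*sqrt(ln(1/eta)/(2*n*m)). -/

import Mathlib

/-!
Regard `MCERA_n(F, S, σ)` as a function of the `n * m` independent uniform bits of `σ`. Flipping
one bit `σ_{j,i}` changes only the `j`-th supremum, and each correlation inside it by at most
`2 z / m`, so `MCERA_n` changes by at most `c = 2 z / (n m)`. McDiarmid's inequality then bounds
the proportion of `σ` with `MCERA_n ≤ ERA - t` by `exp (-2 t² / (n m c²))`, which equals `η` for the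
chosen `t`. McDiarmid's inequality is proved by counting: a Chernoff bound, together with the
exponential moment bound `E exp (l f) ≤ exp (l E f + l² Σ cᵢ² / 8)`, which follows by conditioning
on one bit at a time and the two-point estimate `cosh x ≤ exp (x² / 2)`.
-/

open Finset Real

theorem exp_mul_add_exp_mul_le {u v c : ℝ} (h : |u - v| ≤ c) (l : ℝ) :
    exp (l * u) + exp (l * v) ≤ 2 * exp (l * ((u + v) / 2) + l ^ 2 * c ^ 2 / 8) := by
  have hcosh : exp (l * u) + exp (l * v) =
      2 * exp (l * ((u + v) / 2)) * cosh (l * ((u - v) / 2)) := by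
    have hu : l * u = l * ((u + v) / 2) + l * ((u - v) / 2) := by ring
    have hv : l * v = l * ((u + v) / 2) + -(l * ((u - v) / 2)) := by ring
    rw [cosh_eq, hu, hv, exp_add, exp_add]
    ring
  have hsq : (l * ((u - v) / 2)) ^ 2 / 2 ≤ l ^ 2 * c ^ 2 / 8 := by
    have : (u - v) ^ 2 ≤ c ^ 2 := sq_le_sq' (abs_le.mp h).1 (abs_le.mp h).2
    nlinarith [sq_nonneg l]
  rw [hcosh, exp_add, mul_assoc]
  gcongr
  exact (cosh_le_exp_half_sq _).trans (exp_le_exp.mpr hsq)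

def HasBoundedDifferences {ι : Type*} [DecidableEq ι] (f : (ι → Bool) → ℝ) (c : ι → ℝ) : Prop :=
  ∀ x i b, |f (Function.update x i b) - f x| ≤ c i

noncomputable def rowAverage {ι κ : Type*} [Fintype ι] (H : (κ → Bool) → ℝ)
    (σ : ι → κ → Bool) : ℝ :=
  (1 / (Fintype.card ι : ℝ)) * ∑ j, H (σ j)

namespace HasBoundedDifferences

variable {ι κ : Type*} [DecidableEq ι] [DecidableEq κ]

theorem mono {f : (ι → Bool) → ℝ} {c c' : ι → ℝ} (hf : HasBoundedDifferences f c)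
    (h : ∀ i, c i ≤ c' i) : HasBoundedDifferences f c' := fun x i b => (hf x i b).trans (h i)

theorem neg {f : (ι → Bool) → ℝ} {c : ι → ℝ} (hf : HasBoundedDifferences f c) :
    HasBoundedDifferences (-f) c := fun x i b => by
  rw [Pi.neg_apply, Pi.neg_apply, neg_sub_neg, abs_sub_comm]
  exact hf x i b

theorem const_mul {f : (ι → Bool) → ℝ} {c : ι → ℝ} (hf : HasBoundedDifferences f c) (a : ℝ) :
    HasBoundedDifferences (fun x => a * f x) (fun i => |a| * c i) := fun x i b => by
  rw [← mul_sub, abs_mul]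
  exact mul_le_mul_of_nonneg_left (hf x i b) (abs_nonneg a)

theorem finset_sup' {α : Type*} {s : Finset α} (hs : s.Nonempty) {f : α → (ι → Bool) → ℝ}
    {c : ι → ℝ} (hf : ∀ a ∈ s, HasBoundedDifferences (f a) c) :
    HasBoundedDifferences (fun x => s.sup' hs fun a => f a x) c := fun x i b => by
  simp only [abs_sub_le_iff, sub_le_iff_le_add', sup'_add]
  constructor <;> refine sup'_mono_fun fun a ha => ?_ <;>
    linarith [abs_sub_le_iff.mp (hf a ha x i b)]

theorem comp_equiv {f : (ι → Bool) → ℝ} {c : ι → ℝ} (hf : HasBoundedDifferences f c)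
    (e : ι ≃ κ) : HasBoundedDifferences (fun y : κ → Bool => f (y ∘ e)) (c ∘ e.symm) :=
  fun y k b => by simpa [Function.update_comp_equiv] using hf (y ∘ e) (e.symm k) b

theorem average_rows [Fintype ι] {H : (κ → Bool) → ℝ} {c : κ → ℝ}
    (hH : HasBoundedDifferences H c) :
    HasBoundedDifferences (fun x : ι × κ → Bool => rowAverage H (Equiv.curry ι κ Bool x))
      (fun p => c p.2 / Fintype.card ι) := by
  rintro x ⟨j, i⟩ b
  simp only [rowAverage, Equiv.curry_apply]
  have hrow : Function.curry (Function.update x (j, i) b) j =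
      Function.update (Function.curry x j) i b := by
    funext i'
    simp [Function.update_apply]
  have hsum : ∑ j', H (Function.curry (Function.update x (j, i) b) j') -
      ∑ j', H (Function.curry x j') =
      H (Function.update (Function.curry x j) i b) - H (Function.curry x j) := by
    rw [← sum_sub_distrib, sum_eq_single j (fun j' _ hj' =>
      sub_eq_zero.mpr (congrArg H (funext fun i' => by simp [hj'])))
      (by simp), hrow]
  rw [← mul_sub, hsum, abs_mul, abs_of_nonneg (by positivity), one_div_mul_eq_div]
  gcongr
  exact hH _ i b

variable {N : ℕ} {f : (Fin (N + 1) → Bool) → ℝ} {c : Fin (N + 1) → ℝ}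

theorem abs_cons_true_sub_cons_false_le (hf : HasBoundedDifferences f c) (y : Fin N → Bool) :
    |f (Fin.cons true y) - f (Fin.cons false y)| ≤ c 0 := by
  simpa only [Fin.update_cons_zero] using hf (Fin.cons false y) 0 true

theorem average_cons (hf : HasBoundedDifferences f c) :
    HasBoundedDifferences (fun y => (f (Fin.cons true y) + f (Fin.cons false y)) / 2)
      (fun i => c i.succ) := fun y i b => by
  have htrue := abs_le.mp (hf (Fin.cons true y) i.succ b)
  have hfalse := abs_le.mp (hf (Fin.cons false y) i.succ b)
  simp only [← Fin.cons_update] at htrue hfalse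
  rw [abs_le]
  constructor <;> linarith

end HasBoundedDifferences

theorem Fin.sum_bool_fun_succ {M : Type*} [AddCommMonoid M] {N : ℕ}
    (g : (Fin (N + 1) → Bool) → M) :
    ∑ x, g x = ∑ y : Fin N → Bool, (g (Fin.cons true y) + g (Fin.cons false y)) := by
  rw [← (Fin.consEquiv fun _ => Bool).sum_comp, Fintype.sum_prod_type, Fintype.sum_bool,
    ← sum_add_distrib]
  rfl

theorem sum_exp_mul_le_fin : ∀ {N : ℕ} {f : (Fin N → Bool) → ℝ} {c : Fin N → ℝ},
    HasBoundedDifferences f c → ∀ l : ℝ,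
    ∑ x, exp (l * f x) ≤ 2 ^ N * exp (l * ((∑ x, f x) / 2 ^ N) + l ^ 2 * (∑ i, c i ^ 2) / 8)
  | 0, f, c, _, l => by simp
  | N + 1, f, c, hf, l => by
    set g : (Fin N → Bool) → ℝ := fun y => (f (Fin.cons true y) + f (Fin.cons false y)) / 2
    have hpair (y : Fin N → Bool) :
        exp (l * f (Fin.cons true y)) + exp (l * f (Fin.cons false y)) ≤
          2 * exp (l ^ 2 * c 0 ^ 2 / 8) * exp (l * g y) := by
      rw [mul_assoc, ← exp_add, add_comm (_ / 8)]
      exact exp_mul_add_exp_mul_le (hf.abs_cons_true_sub_cons_false_le y) l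
    have hsum : ∑ x, f x = 2 * ∑ y, g y := by
      rw [Fin.sum_bool_fun_succ, mul_sum]
      exact sum_congr rfl fun y _ => by ring
    have hexponent : l * ((2 * ∑ y, g y) / 2 ^ (N + 1)) + l ^ 2 * (∑ i, c i ^ 2) / 8 =
        l ^ 2 * c 0 ^ 2 / 8 +
          (l * ((∑ y, g y) / 2 ^ N) + l ^ 2 * (∑ i : Fin N, c i.succ ^ 2) / 8) := by
      rw [Fin.sum_univ_succ, pow_succ]
      field_simp
      ring
    calc ∑ x, exp (l * f x)
        = ∑ y, (exp (l * f (Fin.cons true y)) + exp (l * f (Fin.cons false y))) :=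
          Fin.sum_bool_fun_succ _
      _ ≤ ∑ y, 2 * exp (l ^ 2 * c 0 ^ 2 / 8) * exp (l * g y) := sum_le_sum fun y _ => hpair y
      _ = 2 * exp (l ^ 2 * c 0 ^ 2 / 8) * ∑ y, exp (l * g y) := by rw [mul_sum]
      _ ≤ 2 * exp (l ^ 2 * c 0 ^ 2 / 8) *
          (2 ^ N * exp (l * ((∑ y, g y) / 2 ^ N) + l ^ 2 * (∑ i : Fin N, c i.succ ^ 2) / 8)) := by
        gcongr
        exact sum_exp_mul_le_fin hf.average_cons l
      _ = _ := by
        rw [hsum, hexponent, exp_add (l ^ 2 * c 0 ^ 2 / 8), pow_succ]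
        ring

theorem card_filter_le_le_mul_sum_exp {α : Type*} [Fintype α] (g : α → ℝ) (a : ℝ) {l : ℝ}
    (hl : 0 ≤ l) : (#{x : α | a ≤ g x} : ℝ) ≤ exp (-(l * a)) * ∑ x, exp (l * g x) := by
  calc (#{x : α | a ≤ g x} : ℝ) = exp (-(l * a)) * ∑ x ∈ {x | a ≤ g x}, exp (l * a) := by
        rw [sum_const, nsmul_eq_mul, mul_left_comm, ← exp_add, neg_add_cancel, exp_zero, mul_one]
    _ ≤ exp (-(l * a)) * ∑ x ∈ {x | a ≤ g x}, exp (l * g x) := by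
        gcongr with x hx
        exact (mem_filter.mp hx).2
    _ ≤ exp (-(l * a)) * ∑ x, exp (l * g x) := by
        gcongr
        exact subset_univ _

section McDiarmid

variable {ι : Type*} [Fintype ι] [DecidableEq ι] {f : (ι → Bool) → ℝ} {c : ι → ℝ}

theorem sum_exp_mul_le (hf : HasBoundedDifferences f c) (l : ℝ) :
    ∑ x, exp (l * f x) ≤ 2 ^ Fintype.card ι *
      exp (l * ((∑ x, f x) / 2 ^ Fintype.card ι) + l ^ 2 * (∑ i, c i ^ 2) / 8) := by
  let e := Fintype.equivFin ι
  have hsum (g : (ι → Bool) → ℝ) : ∑ y : Fin _ → Bool, g (y ∘ e) = ∑ x, g x :=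
    (e.arrowCongr (Equiv.refl Bool)).symm.sum_comp g
  have hc : ∑ k, (c ∘ e.symm) k ^ 2 = ∑ i, c i ^ 2 := e.symm.sum_comp (c · ^ 2)
  have := sum_exp_mul_le_fin (hf.comp_equiv e) l
  rwa [hsum f, hc, hsum fun x => exp (l * f x)] at this

theorem card_filter_le_mean_sub_le (hf : HasBoundedDifferences f c) {t : ℝ} (ht : 0 ≤ t) :
    (#{x | f x ≤ (∑ y, f y) / 2 ^ Fintype.card ι - t} : ℝ) ≤
      2 ^ Fintype.card ι * exp (-(2 * t ^ 2 / ∑ i, c i ^ 2)) := by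
  set μ := (∑ y, f y) / 2 ^ Fintype.card ι
  set S := ∑ i, c i ^ 2
  -- the Chernoff parameter minimising `l ^ 2 * S / 8 - l * t`
  set l := 4 * t / S
  have hl : 0 ≤ l := by positivity
  have hexponent : -(l * (t - μ)) + (l * -μ + l ^ 2 * S / 8) = -(2 * t ^ 2 / S) := by
    rcases eq_or_ne S 0 with hS | hS
    · simp [l, hS]
    · simp only [l]
      field_simp
      ring
  have hmgf := sum_exp_mul_le hf.neg l
  simp only [Pi.neg_apply, sum_neg_distrib, neg_div] at hmgf
  calc (#{x | f x ≤ μ - t} : ℝ) = #{x | t - μ ≤ -f x} := by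
        congr 2
        exact filter_congr fun x _ => ⟨fun h => by linarith, fun h => by linarith⟩
    _ ≤ exp (-(l * (t - μ))) * ∑ x, exp (l * -f x) := card_filter_le_le_mul_sum_exp _ _ hl
    _ ≤ exp (-(l * (t - μ))) * (2 ^ Fintype.card ι * exp (l * -μ + l ^ 2 * S / 8)) := by
        gcongr
    _ = 2 ^ Fintype.card ι * exp (-(2 * t ^ 2 / S)) := by
        rw [mul_left_comm, ← exp_add, hexponent]

theorem le_card_filter_mean_le_add (hf : HasBoundedDifferences f c) {t : ℝ} (ht : 0 ≤ t) :
    (1 - exp (-(2 * t ^ 2 / ∑ i, c i ^ 2))) * 2 ^ Fintype.card ι ≤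
      #{x | (∑ y, f y) / 2 ^ Fintype.card ι ≤ f x + t} := by
  set μ := (∑ y, f y) / 2 ^ Fintype.card ι
  have hsplit : (#{x | μ ≤ f x + t} : ℝ) + #{x | ¬μ ≤ f x + t} = 2 ^ Fintype.card ι := by
    exact_mod_cast (card_filter_add_card_filter_not _).trans (by simp)
  have hbad : #{x | ¬μ ≤ f x + t} ≤ #{x | f x ≤ μ - t} :=
    card_le_card <| monotone_filter_right _ fun x _ h => by linarith [not_le.mp h]
  have hbad' : (#{x | ¬μ ≤ f x + t} : ℝ) ≤ #{x | f x ≤ μ - t} := by exact_mod_cast hbad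
  linarith [card_filter_le_mean_sub_le hf ht]

end McDiarmid

theorem rowAverage_fin {κ : Type*} {n : ℕ} (H : (κ → Bool) → ℝ) (σ : Fin n → κ → Bool) :
    rowAverage H σ = (1 / (n : ℝ)) * ∑ j, H (σ j) := by
  rw [rowAverage, Fintype.card_fin]

theorem le_card_filter_mean_rowAverage_le_add {ι κ : Type*} [Fintype ι] [Fintype κ]
    [DecidableEq ι] [DecidableEq κ] {H : (κ → Bool) → ℝ} {c : κ → ℝ}
    (hH : HasBoundedDifferences H c) {t : ℝ} (ht : 0 ≤ t) :
    (1 - exp (-(2 * t ^ 2 * Fintype.card ι / ∑ i, c i ^ 2))) *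
        2 ^ (Fintype.card ι * Fintype.card κ) ≤
      #{σ : ι → κ → Bool | 1 / 2 ^ (Fintype.card ι * Fintype.card κ) *
        ∑ σ' : ι → κ → Bool, rowAverage H σ' ≤ rowAverage H σ + t} := by
  have h := le_card_filter_mean_le_add (ι := ι × κ) hH.average_rows ht
  have hS : ∑ p : ι × κ, (c p.2 / Fintype.card ι) ^ 2 = (∑ i, c i ^ 2) / Fintype.card ι := by
    simp only [Fintype.sum_prod_type, sum_const, card_univ, nsmul_eq_mul, div_pow, ← sum_div]
    rcases eq_or_ne (Fintype.card ι : ℝ) 0 with hι | hι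
    · simp [hι]
    · field_simp
  have hmean : ∑ x : ι × κ → Bool, rowAverage H (Equiv.curry ι κ Bool x) =
      ∑ σ, rowAverage H σ :=
    (Equiv.curry ι κ Bool).sum_comp (rowAverage H)
  rw [Fintype.card_prod, hmean, hS, div_div_eq_mul_div,
    ← one_div_mul_eq_div _ (∑ σ, rowAverage H σ)] at h
  exact h.trans_eq (by exact_mod_cast card_equiv (Equiv.curry ι κ Bool) (by simp))

theorem hasBoundedDifferences_sum_sign_mul {κ : Type*} [Fintype κ] [DecidableEq κ] (g : κ → ℝ) :
    HasBoundedDifferences (fun r : κ → Bool => ∑ i, (if r i then (1 : ℝ) else -1) * g i)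
      (fun i => 2 * |g i|) := fun r i b => by
  rw [← sum_sub_distrib, sum_eq_single i (fun i' _ hi' => by simp [Function.update_of_ne hi'])
    (by simp), Function.update_self, ← sub_mul, abs_mul]
  refine mul_le_mul_of_nonneg_right ?_ (abs_nonneg _)
  cases b <;> cases r i <;> norm_num

noncomputable def rademacherSup {X : Type*} {m : ℕ} (F : Finset (X → ℝ)) (hF : F.Nonempty)
    (s : Fin m → X) (r : Fin m → Bool) : ℝ :=
  F.sup' hF fun f => (1 / (m : ℝ)) * ∑ i, (if r i then (1 : ℝ) else -1) * f (s i)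

section Rademacher

variable {X : Type*} {m : ℕ} {F : Finset (X → ℝ)} (hF : F.Nonempty) {s : Fin m → X}

theorem hasBoundedDifferences_rademacherSup {z : ℝ} (hz : ∀ f ∈ F, ∀ i, |f (s i)| ≤ z) :
    HasBoundedDifferences (rademacherSup F hF s) fun _ => 2 * z / m :=
  HasBoundedDifferences.finset_sup' hF fun f hf =>
    ((hasBoundedDifferences_sum_sign_mul _).const_mul _).mono fun i => by
      rw [abs_of_nonneg (by positivity), one_div_mul_eq_div]
      gcongr
      exact hz f hf i

theorem rademacherSup_eq_zero (h : ∀ f ∈ F, ∀ i, f (s i) = 0) (r : Fin m → Bool) :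
    rademacherSup F hF s r = 0 :=
  (sup'_congr hF rfl fun f hf => by simp [h f hf]).trans (sup'_const hF 0)

end Rademacher

open scoped Classical in
/-- With probability at least 1-η over σ, ERA ≤ MCERA + 2z√(ln(1/η)/(2nm)). -/
theorem era_le_mcera_whp {X : Type*} {m n : ℕ} (hm : 0 < m) (hn : 0 < n) (s : Fin m → X)
    (F : Finset (X → ℝ)) (hF : F.Nonempty) (a b : ℝ)
    (hab : ∀ f ∈ F, ∀ x, a ≤ f x ∧ f x ≤ b)
    (η : ℝ) (hη : 0 < η) (hη1 : η < 1) :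
    let z := max |a| |b|
    let MCERA := fun σ : Fin n → Fin m → Bool =>
      (1 / (n : ℝ)) * ∑ j, F.sup' hF
        (fun f => (1 / (m : ℝ)) * ∑ i, (if σ j i then (1 : ℝ) else -1) * f (s i))
    let ERA := (1 / (2 : ℝ) ^ (n * m)) * ∑ σ : Fin n → Fin m → Bool, MCERA σ
    (1 - η) * (2 : ℝ) ^ (n * m) ≤
      ((Finset.univ.filter fun σ : Fin n → Fin m → Bool =>
        ERA ≤ MCERA σ + 2 * z * Real.sqrt (Real.log (1 / η) / (2 * n * m))).card : ℝ) := by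
  intro z MCERA ERA
  have hfz : ∀ f ∈ F, ∀ x, |f x| ≤ z := fun f hf x =>
    abs_le_max_abs_abs (hab f hf x).1 (hab f hf x).2
  -- for `z = 0` the deviation is `0` and McDiarmid's bound is void, but then `MCERA ≡ 0`
  rcases ((abs_nonneg a).trans (le_max_left _ |b|)).eq_or_lt with hz | hz
  · have hzero (σ : Fin n → Fin m → Bool) : MCERA σ = 0 := by
      change (1 / (n : ℝ)) * ∑ j, rademacherSup F hF s (σ j) = 0
      simp [rademacherSup_eq_zero hF fun f hf i =>
        abs_nonpos_iff.mp ((hfz f hf (s i)).trans_eq hz.symm)]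
    rw [filter_true_of_mem fun σ _ => by simp [ERA, hzero, show z = 0 from hz.symm], card_univ]
    simp only [Fintype.card_fun, Fintype.card_bool, Fintype.card_fin, Nat.cast_pow,
      Nat.cast_ofNat, ← pow_mul, mul_comm m n]
    exact mul_le_of_le_one_left (by positivity) (by linarith)
  · set L := log (1 / η)
    set t := 2 * z * sqrt (L / (2 * n * m))
    have hL : 0 < L := log_pos ((one_lt_div hη).mpr hη1)
    have h := le_card_filter_mean_rowAverage_le_add (ι := Fin n)
      (hasBoundedDifferences_rademacherSup hF fun f hf i => hfz f hf (s i)) (t := t) (by positivity)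
    have hz0 : z ≠ 0 := hz.ne'
    have hexponent : 2 * t ^ 2 * n / ∑ i : Fin m, (2 * z / m) ^ 2 = L := by
      simp only [t, mul_pow, sq_sqrt (by positivity : 0 ≤ L / (2 * n * m)), sum_const, card_univ,
        Fintype.card_fin, nsmul_eq_mul]
      field_simp
    simp only [rowAverage_fin, Fintype.card_fin, hexponent] at h
    rwa [exp_neg, exp_log (by positivity), one_div, inv_inv] at h
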